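/- arXiv:1903.10992 — 2 statements merged into one kernel-verified Lean document; each statement's English description precedes it below -/
import Mathlib

section
/- The Shapley value satisfies efficiency (completeness): for any cooperative game on a finite set P of players with characteristic function v (with v(∅)=0), the sum over all players i of their Shapley value equals v(P). -/
/-!
Summing the Shapley values over all players and exchanging the order of summation turns
`∑ i, shapley P v i` into a combination of the values `v T`, `T ⊆ P`, with `N = #P`: the
coalition `T` is counted positively once
for each of its `|T|` members, with weight `shapleyWeight N (|T| - 1)`, and negatively once for
each of its `N - |T|` outsiders, with weight `shapleyWeight N |T|`. Both products equal
`1 / (N choose |T|)`, so everything cancels except `+ v P` (no outsiders) and `- v ∅` (no members).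
-/

open Finset

noncomputable def shapley {ι : Type*} [DecidableEq ι] (P : Finset ι)
    (v : Finset ι → ℝ) (i : ι) : ℝ :=
  ∑ S ∈ (P.erase i).powerset,
    ((Nat.factorial S.card * Nat.factorial (P.card - S.card - 1) : ℝ) /
        (Nat.factorial P.card : ℝ)) * (v (insert i S) - v S)

open scoped Nat

namespace Finset

variable {ι M : Type*} [DecidableEq ι] [AddCommMonoid M]

theorem sum_powerset_erase_insert {P : Finset ι} {i : ι} (hi : i ∈ P) (f : Finset ι → M) :
    ∑ S ∈ (P.erase i).powerset, f (insert i S) = ∑ T ∈ P.powerset with i ∈ T, f T := by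
  refine sum_nbij' (insert i) (fun T ↦ T.erase i) (fun S hS ↦ ?_) (fun T hT ↦ ?_)
    (fun S hS ↦ ?_) (fun T hT ↦ ?_) fun _ _ ↦ rfl
  · obtain ⟨hSP, -⟩ := subset_erase.1 (mem_powerset.1 hS)
    exact mem_filter.2 ⟨mem_powerset.2 (insert_subset hi hSP), mem_insert_self i S⟩
  · exact mem_powerset.2 (erase_subset_erase i (mem_powerset.1 (mem_filter.1 hT).1))
  · exact erase_insert (subset_erase.1 (mem_powerset.1 hS)).2
  · exact insert_erase (mem_filter.1 hT).2

theorem sum_sum_powerset_filter_mem (P : Finset ι) (f : Finset ι → M) :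
    ∑ i ∈ P, ∑ T ∈ P.powerset with i ∈ T, f T = ∑ T ∈ P.powerset, #T • f T := by
  rw [sum_comm' (t' := P.powerset) (s' := id)]
  · simp [sum_const]
  · intro i T
    simp only [mem_filter, mem_powerset, id]
    exact ⟨fun ⟨_, hT, hiT⟩ ↦ ⟨hiT, hT⟩, fun ⟨hiT, hT⟩ ↦ ⟨hT hiT, hT, hiT⟩⟩

theorem sum_sum_powerset_erase (P : Finset ι) (f : Finset ι → M) :
    ∑ i ∈ P, ∑ S ∈ (P.erase i).powerset, f S = ∑ S ∈ P.powerset, (#P - #S) • f S := by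
  rw [sum_comm' (t' := P.powerset) (s' := (P \ ·))]
  · refine sum_congr rfl fun S hS ↦ ?_
    rw [sum_const, card_sdiff_of_subset (mem_powerset.1 hS)]
  · intro i S
    simp only [mem_powerset, subset_erase, mem_sdiff]
    tauto

theorem sum_sum_powerset_erase_insert (P : Finset ι) (f : ℕ → Finset ι → M) :
    ∑ i ∈ P, ∑ S ∈ (P.erase i).powerset, f #S (insert i S) =
      ∑ T ∈ P.powerset, #T • f (#T - 1) T := by
  rw [← sum_sum_powerset_filter_mem]
  refine sum_congr rfl fun i hi ↦ ?_
  rw [← sum_powerset_erase_insert hi]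
  refine sum_congr rfl fun S hS ↦ ?_
  rw [card_insert_of_notMem (subset_erase.1 (mem_powerset.1 hS)).2, Nat.add_sub_cancel]

end Finset

noncomputable def shapleyWeight (n k : ℕ) : ℝ := (k ! * (n - k - 1)! : ℝ) / n !

theorem shapley_eq_sum_sub_sum {ι : Type*} [DecidableEq ι] (P : Finset ι) (v : Finset ι → ℝ)
    (i : ι) :
    shapley P v i = ∑ S ∈ (P.erase i).powerset, shapleyWeight #P #S * v (insert i S) -
      ∑ S ∈ (P.erase i).powerset, shapleyWeight #P #S * v S := by
  simp only [shapley, shapleyWeight, mul_sub, sum_sub_distrib]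

theorem natCast_mul_shapleyWeight_pred {n k : ℕ} (hk : 0 < k) (hkn : k ≤ n) :
    k * shapleyWeight n (k - 1) = ((n.choose k : ℕ) : ℝ)⁻¹ := by
  rw [Nat.cast_choose ℝ hkn, inv_div, shapleyWeight, show n - (k - 1) - 1 = n - k by omega,
    ← mul_div_assoc, ← mul_assoc]
  congr 2
  exact_mod_cast Nat.mul_factorial_pred hk.ne'

theorem natCast_sub_mul_shapleyWeight {n k : ℕ} (hkn : k < n) :
    ((n - k : ℕ) : ℝ) * shapleyWeight n k = ((n.choose k : ℕ) : ℝ)⁻¹ := by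
  rw [Nat.cast_choose ℝ hkn.le, inv_div, shapleyWeight, ← mul_div_assoc, mul_left_comm]
  congr 2
  exact_mod_cast Nat.mul_factorial_pred (Nat.sub_ne_zero_of_lt hkn)

section

variable {ι : Type*} [DecidableEq ι] (P : Finset ι) (g : Finset ι → ℝ)

theorem sum_card_smul_shapleyWeight_pred :
    ∑ T ∈ P.powerset, #T • (shapleyWeight #P (#T - 1) * g T) =
      ∑ T ∈ P.powerset.erase ∅, (((#P).choose #T : ℕ) : ℝ)⁻¹ * g T := by
  rw [← sum_erase _ (by rw [card_empty, zero_smul])]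
  refine sum_congr rfl fun T hT ↦ ?_
  obtain ⟨hT, hTP⟩ := mem_erase.1 hT
  rw [nsmul_eq_mul, ← mul_assoc, natCast_mul_shapleyWeight_pred (card_pos.2
    (nonempty_iff_ne_empty.2 hT)) (card_le_card (mem_powerset.1 hTP))]

theorem sum_sub_card_smul_shapleyWeight :
    ∑ S ∈ P.powerset, (#P - #S) • (shapleyWeight #P #S * g S) =
      ∑ S ∈ P.powerset.erase P, (((#P).choose #S : ℕ) : ℝ)⁻¹ * g S := by
  rw [← sum_erase _ (by rw [Nat.sub_self, zero_smul])]
  refine sum_congr rfl fun S hS ↦ ?_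
  obtain ⟨hSP, hS⟩ := mem_erase.1 hS
  rw [nsmul_eq_mul, ← mul_assoc, natCast_sub_mul_shapleyWeight
    (card_lt_card (ssubset_of_subset_of_ne (mem_powerset.1 hS) hSP))]

end

/-- Efficiency (completeness) of the Shapley value. -/
theorem shapley_efficiency {ι : Type*} [DecidableEq ι] (P : Finset ι)
    (v : Finset ι → ℝ) (h0 : v ∅ = 0) :
    ∑ i ∈ P, shapley P v i = v P := by
  calc ∑ i ∈ P, shapley P v i
      = ∑ T ∈ P.powerset.erase ∅, (((#P).choose #T : ℕ) : ℝ)⁻¹ * v T -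
          ∑ T ∈ P.powerset.erase P, (((#P).choose #T : ℕ) : ℝ)⁻¹ * v T := by
        simp only [shapley_eq_sum_sub_sum, sum_sub_distrib, ← sum_card_smul_shapleyWeight_pred,
          ← sum_sub_card_smul_shapleyWeight, sum_sum_powerset_erase,
          ← sum_sum_powerset_erase_insert P fun k T ↦ shapleyWeight #P k * v T]
    _ = v P - v ∅ := by
        rw [sum_erase_eq_sub (empty_mem_powerset P), sum_erase_eq_sub (mem_powerset_self P)]
        simp
    _ = v P := by rw [h0, sub_zero]
end

section
/- Unanimity games form a basis: every game v : Set P → ℝ with v(∅) = 0 can be written uniquely as a linear combination v = Σ_{T ⊆ P, T ≠ ∅} c_T · u_T with coefficients c_T = Σ_{S ⊆ T} (-1)^{|T|-|S|} v(S). -/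
/-!
Expanding `v` in unanimity games is the zeta transform `v S = ∑_{T ⊆ S} c T` on the Boolean
lattice, so both existence and uniqueness of the coefficients are Möbius inversion. Its two
directions come down to `∑_{U ⊆ S ⊆ T} (-1)^(|S|-|U|) = [U = T]` and its mirror image. The
coefficient of `∅` may be dropped because the Möbius coefficient of `∅` is `v ∅ = 0`.
-/

open Finset

theorem neg_one_pow_sub_eq_mul {R : Type*} [Monoid R] [HasDistribNeg R] {a b c : ℕ}
    (hab : a ≤ b) (hbc : b ≤ c) : (-1 : R) ^ (c - b) = (-1) ^ (c - a) * (-1) ^ (b - a) := by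
  rw [← pow_add, show c - a + (b - a) = c - b + 2 * (b - a) by omega, pow_add, pow_mul]
  simp

section

variable {ι R : Type*} [Ring R]

def moebiusTransform (v : Finset ι → R) (T : Finset ι) : R :=
  ∑ S ∈ T.powerset, (-1) ^ (#T - #S) * v S

variable [DecidableEq ι]

namespace Finset

theorem sum_powerset_neg_one_pow_card' (s : Finset ι) :
    ∑ u ∈ s.powerset, (-1 : R) ^ #u = if s = ∅ then 1 else 0 := by
  have := congrArg (Int.cast : ℤ → R) (sum_powerset_neg_one_pow_card (x := s))
  push_cast at this
  simpa [apply_ite (Int.cast : ℤ → R)] using this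

theorem sum_Icc_neg_one_pow_card_sub_left {s t : Finset ι} (h : s ⊆ t) :
    ∑ u ∈ Icc s t, (-1 : R) ^ (#u - #s) = if s = t then 1 else 0 := by
  have hdisj {w} (hw : w ∈ (t \ s).powerset) : Disjoint s w :=
    disjoint_sdiff.mono_right (mem_powerset.1 hw)
  have hinj : Set.InjOn (s ∪ ·) (t \ s).powerset := fun w hw w' hw' hww' => by
    simpa [union_sdiff_left, (hdisj hw).symm.sdiff_eq_left, (hdisj hw').symm.sdiff_eq_left]
      using congrArg (· \ s) hww'
  rw [Icc_eq_image_powerset h, sum_image hinj,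
    sum_congr rfl fun w hw => by rw [card_union_of_disjoint (hdisj hw), Nat.add_sub_cancel_left],
    sum_powerset_neg_one_pow_card']
  exact if_congr (sdiff_eq_empty_iff_subset.trans ⟨h.antisymm, fun hst => hst ▸ subset_rfl⟩) rfl rfl

theorem sum_Icc_neg_one_pow_card_sub_right {s t : Finset ι} (h : s ⊆ t) :
    ∑ u ∈ Icc s t, (-1 : R) ^ (#t - #u) = if s = t then 1 else 0 := by
  rw [sum_congr rfl fun u hu =>
      neg_one_pow_sub_eq_mul (card_le_card (mem_Icc.1 hu).1) (card_le_card (mem_Icc.1 hu).2),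
    ← mul_sum, sum_Icc_neg_one_pow_card_sub_left h]
  split_ifs with hst <;> simp [hst]

theorem sum_powerset_sum_powerset_comm (S : Finset ι) (F : Finset ι → Finset ι → R) :
    ∑ T ∈ S.powerset, ∑ U ∈ T.powerset, F T U = ∑ U ∈ S.powerset, ∑ T ∈ Icc U S, F T U :=
  sum_comm' fun T U => by
    simp only [mem_powerset, mem_Icc]
    exact ⟨fun ⟨hTS, hUT⟩ => ⟨⟨hUT, hTS⟩, hUT.trans hTS⟩, fun ⟨⟨hUT, hTS⟩, _⟩ => ⟨hTS, hUT⟩⟩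

theorem sum_filter_ne_empty_mul_ite_subset {P S : Finset ι} (hS : S ⊆ P) (f : Finset ι → R) :
    ∑ T ∈ P.powerset.filter (· ≠ ∅), f T * (if T ⊆ S then 1 else 0) =
      ∑ T ∈ S.powerset, if T ≠ ∅ then f T else 0 := by
  simp only [mul_ite, mul_one, mul_zero]
  rw [← sum_filter, ← sum_filter, filter_filter]
  congr 1
  ext T
  simp only [mem_filter, mem_powerset]
  exact ⟨fun ⟨_, hT, hTS⟩ => ⟨hTS, hT⟩, fun ⟨hTS, hT⟩ => ⟨hTS.trans hS, hT, hTS⟩⟩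

end Finset

theorem sum_powerset_moebiusTransform (v : Finset ι → R) (S : Finset ι) :
    ∑ T ∈ S.powerset, moebiusTransform v T = v S := by
  simp only [moebiusTransform]
  rw [sum_powerset_sum_powerset_comm, sum_congr rfl fun U hU => by
    rw [← sum_mul, sum_Icc_neg_one_pow_card_sub_left (mem_powerset.1 hU)]]
  simp

theorem moebiusTransform_sum_powerset (f : Finset ι → R) (T : Finset ι) :
    moebiusTransform (fun S => ∑ U ∈ S.powerset, f U) T = f T := by
  simp only [moebiusTransform, mul_sum]
  rw [sum_powerset_sum_powerset_comm, sum_congr rfl fun U hU => by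
    rw [← sum_mul, sum_Icc_neg_one_pow_card_sub_right (mem_powerset.1 hU)]]
  simp

end

/-- Unanimity games form a basis: every game with `v ∅ = 0` is a unique linear
combination of unanimity games over nonempty coalitions, with Möbius
coefficients `c T = ∑ S ⊆ T, (-1)^(|T|-|S|) v S`. -/
theorem unanimity_basis {ι : Type*} [DecidableEq ι] (P : Finset ι)
    (v : Finset ι → ℝ) (h0 : v ∅ = 0) :
    (∀ S ∈ P.powerset,
        v S = ∑ T ∈ P.powerset.filter (· ≠ ∅),
          (∑ S' ∈ T.powerset, (-1 : ℝ) ^ (T.card - S'.card) * v S') *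
            (if T ⊆ S then 1 else 0)) ∧
      ∀ c : Finset ι → ℝ,
        (∀ S ∈ P.powerset,
            v S = ∑ T ∈ P.powerset.filter (· ≠ ∅),
              c T * (if T ⊆ S then 1 else 0)) →
          ∀ T ∈ P.powerset, T ≠ ∅ →
            c T = ∑ S' ∈ T.powerset, (-1 : ℝ) ^ (T.card - S'.card) * v S' := by
  refine ⟨fun S hS => ?_, fun c hc T hT hT0 => ?_⟩
  · rw [sum_filter_ne_empty_mul_ite_subset (mem_powerset.1 hS)]
    refine (sum_powerset_moebiusTransform v S).symm.trans (sum_congr rfl fun T _ => ?_)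
    split_ifs with hT
    · rfl
    · simp [not_not.1 hT, moebiusTransform, h0]
  · set c' : Finset ι → ℝ := fun U => if U ≠ ∅ then c U else 0
    have hv : ∀ S ⊆ T, v S = ∑ U ∈ S.powerset, c' U := fun S hS =>
      (hc S (mem_powerset.2 (hS.trans (mem_powerset.1 hT)))).trans
        (sum_filter_ne_empty_mul_ite_subset (hS.trans (mem_powerset.1 hT)) c)
    calc c T = c' T := (if_pos hT0).symm
      _ = moebiusTransform (fun S => ∑ U ∈ S.powerset, c' U) T :=
        (moebiusTransform_sum_powerset c' T).symm
      _ = _ := sum_congr rfl fun S hS => by rw [hv S (mem_powerset.1 hS)]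
end
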